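/- For all ω > 0 and η > 0, the variance of the Shiha distribution satisfies ∫₀^∞ y² f(y; ω, η) dy − (∫₀^∞ y f(y; ω, η) dy)² = (17η² + 18ηω + 4ω²) / (4ω² (ω + 3η)²). In particular the mean is (2ω + 5η)/(2ω(ω + 3η)) and the second raw moment is (4ω + 7η)/(2ω²(ω + 3η)). -/

import Mathlib

open Real MeasureTheory

noncomputable def shihaPdf (ω η y : ℝ) : ℝ :=
  ω / (ω + 3 * η) * (ω + (2 * η + 8 * ω * η * y) * Real.exp (-ω * y)) * Real.exp (-ω * y)

/-!
The density is a combination of `ω e^{-ωy}`, `e^{-2ωy}` and `y e^{-2ωy}`, so every raw moment is a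
combination of Gamma integrals `∫₀^∞ yⁿ e^{-by} dy = n! / b^{n+1}`. This gives the closed form
`μ'_k = ω/(ω + 3η) · k! (2^k ω + (2k + 3) η) / (2^k ω^{k+1})`, from which the mean, the second
moment and the variance follow by algebra.
-/

open Set Nat

lemma integrableOn_pow_mul_exp_neg_mul_Ioi (n : ℕ) {b : ℝ} (hb : 0 < b) :
    IntegrableOn (fun y : ℝ => y ^ n * exp (-(b * y))) (Ioi 0) := by
  refine (integrableOn_rpow_mul_exp_neg_mul_rpow (s := n) (p := 1)
    (by linarith [n.cast_nonneg (α := ℝ)]) one_pos hb).congr_fun (fun y _ => ?_) measurableSet_Ioi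
  simp only [rpow_natCast, rpow_one, neg_mul]

lemma integral_pow_mul_exp_neg_mul_Ioi (n : ℕ) {b : ℝ} (hb : 0 < b) :
    ∫ y in Ioi (0 : ℝ), y ^ n * exp (-(b * y)) = n ! / b ^ (n + 1) := by
  have h := integral_rpow_mul_exp_neg_mul_Ioi (a := n + 1) (by positivity) hb
  rw [add_sub_cancel_right, Gamma_nat_eq_factorial, ← cast_succ, rpow_natCast, one_div, inv_pow]
    at h
  simpa only [rpow_natCast, mul_comm _ (n ! : ℝ), div_eq_mul_inv] using h

lemma shihaPdf_eq (ω η y : ℝ) :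
    shihaPdf ω η y = ω / (ω + 3 * η) *
      (ω * exp (-(ω * y)) + 2 * η * exp (-(2 * ω * y)) + 8 * ω * η * (y * exp (-(2 * ω * y)))) := by
  have hsq : exp (-ω * y) * exp (-ω * y) = exp (-(2 * ω * y)) := by
    rw [← exp_add]; ring_nf
  rw [shihaPdf, ← hsq, neg_mul]
  ring

lemma integral_pow_mul_shihaPdf (k : ℕ) {ω : ℝ} (hω : 0 < ω) (η : ℝ) :
    ∫ y in Ioi (0 : ℝ), y ^ k * shihaPdf ω η y
      = ω / (ω + 3 * η) * (k ! * (2 ^ k * ω + (2 * k + 3) * η) / (2 ^ k * ω ^ (k + 1))) := by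
  have h2ω : 0 < 2 * ω := by linarith
  have i1 := (integrableOn_pow_mul_exp_neg_mul_Ioi k hω).const_mul ω
  have i2 := (integrableOn_pow_mul_exp_neg_mul_Ioi k h2ω).const_mul (2 * η)
  have i3 := (integrableOn_pow_mul_exp_neg_mul_Ioi (k + 1) h2ω).const_mul (8 * ω * η)
  have i12 : IntegrableOn (fun y => ω * (y ^ k * exp (-(ω * y)))
      + 2 * η * (y ^ k * exp (-(2 * ω * y)))) (Ioi 0) := i1.add i2
  have hexpand : (fun y => y ^ k * shihaPdf ω η y) = fun y => ω / (ω + 3 * η) *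
      (ω * (y ^ k * exp (-(ω * y))) + 2 * η * (y ^ k * exp (-(2 * ω * y)))
        + 8 * ω * η * (y ^ (k + 1) * exp (-(2 * ω * y)))) := by
    funext y
    rw [shihaPdf_eq]
    ring
  rw [hexpand, integral_const_mul, integral_add i12 i3, integral_add i1 i2,
    integral_const_mul, integral_const_mul, integral_const_mul,
    integral_pow_mul_exp_neg_mul_Ioi k hω, integral_pow_mul_exp_neg_mul_Ioi k h2ω,
    integral_pow_mul_exp_neg_mul_Ioi (k + 1) h2ω, factorial_succ]
  push_cast
  field_simp
  ring

theorem shiha_variance (ω η : ℝ) (hω : 0 < ω) (hη : 0 < η) :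
    (∫ y in Set.Ioi (0 : ℝ), y ^ 2 * shihaPdf ω η y)
      - (∫ y in Set.Ioi (0 : ℝ), y * shihaPdf ω η y) ^ 2
      = (17 * η ^ 2 + 18 * η * ω + 4 * ω ^ 2) / (4 * ω ^ 2 * (ω + 3 * η) ^ 2) ∧
    (∫ y in Set.Ioi (0 : ℝ), y * shihaPdf ω η y)
      = (2 * ω + 5 * η) / (2 * ω * (ω + 3 * η)) ∧
    (∫ y in Set.Ioi (0 : ℝ), y ^ 2 * shihaPdf ω η y)
      = (4 * ω + 7 * η) / (2 * ω ^ 2 * (ω + 3 * η)) := by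
  have hs : ω + 3 * η ≠ 0 := by positivity
  have hmean : (∫ y in Ioi (0 : ℝ), y * shihaPdf ω η y)
      = (2 * ω + 5 * η) / (2 * ω * (ω + 3 * η)) := by
    have h := integral_pow_mul_shihaPdf 1 hω η
    simp only [pow_one] at h
    rw [h]
    field_simp
    ring
  have hsecond : (∫ y in Ioi (0 : ℝ), y ^ 2 * shihaPdf ω η y)
      = (4 * ω + 7 * η) / (2 * ω ^ 2 * (ω + 3 * η)) := by
    rw [integral_pow_mul_shihaPdf 2 hω η]
    norm_num [factorial]
    field_simp
    ring
  refine ⟨?_, hmean, hsecond⟩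
  rw [hmean, hsecond]
  field_simp
  ring
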